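/- In a skew brace $A$, for all $a,x,y \in A$ one has $\lambda_a(x*y) = (a\circ x\circ \overline{a})*\lambda_a(y)$, where $\overline{a}$ is the inverse of $a$ in $(A,\circ)$ and $a*b := \lambda_a(b)\cdot b^{-1}$. -/
import Mathlib


namespace SB

class SkewBrace (A : Type*) extends Group A where
  circ : A → A → A
  sinv : A → A
  circ_assoc : ∀ a b c : A, circ (circ a b) c = circ a (circ b c)
  one_circ : ∀ a : A, circ 1 a = a
  circ_one : ∀ a : A, circ a 1 = a
  sinv_circ : ∀ a : A, circ (sinv a) a = 1
  circ_sinv : ∀ a : A, circ a (sinv a) = 1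
  brace : ∀ a b c : A, circ a (b * c) = circ a b * a⁻¹ * circ a c

open SkewBrace

variable {A : Type*} [SkewBrace A]

/-- The lambda map: `lam a b = a⁻¹ ⬝ (a ∘ b)`. -/
def lam (a b : A) : A := a⁻¹ * circ a b

/-- The star product: `star a b = a⁻¹ ⬝ (a ∘ b) ⬝ b⁻¹`. -/
def star (a b : A) : A := a⁻¹ * circ a b * b⁻¹


lemma lam_mul (a b c : A) : lam a (b * c) = lam a b * lam a c := by
  simp [lam, brace a b c, mul_assoc]

lemma lam_one (a : A) : lam a 1 = 1 := by simp [lam, circ_one]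

lemma lam_inv (a b : A) : lam a b⁻¹ = (lam a b)⁻¹ := by
  have h := lam_mul a b b⁻¹
  rw [mul_inv_cancel, lam_one] at h
  exact eq_inv_of_mul_eq_one_right h.symm

lemma lam_comp (a b c : A) : lam (circ a b) c = lam a (lam b c) := by
  have h : circ a b * a⁻¹ * circ a b⁻¹ = a := by
    have := brace a b b⁻¹
    simp [circ_one] at this
    exact this.symm
  have hY : a⁻¹ * circ a b⁻¹ * a⁻¹ = (circ a b)⁻¹ := by
    have h2 := congrArg (fun z => (circ a b)⁻¹ * z * a⁻¹) h
    simpa [mul_assoc] using h2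
  simp only [lam, brace a b⁻¹ (circ b c), circ_assoc]
  rw [← hY]
  group

theorem lam_star {A : Type*} [SkewBrace A] :
    ∀ a x y : A, lam a (star x y) = star (circ (circ a x) (sinv a)) (lam a y) := by
  intro a x y
  have h1 : circ (circ (circ a x) (sinv a)) a = circ a x := by
    rw [circ_assoc, sinv_circ, circ_one]
  have key : lam (circ (circ a x) (sinv a)) (lam a y) = lam a (lam x y) := by
    rw [← lam_comp, h1, lam_comp]
  have e1 : star x y = lam x y * y⁻¹ := by simp [star, lam]
  have e2 : star (circ (circ a x) (sinv a)) (lam a y)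
      = lam (circ (circ a x) (sinv a)) (lam a y) * (lam a y)⁻¹ := by simp [star, lam]
  rw [e1, lam_mul, lam_inv, e2, key]
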